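/- Let A be a monotone graph property and p = p(n), M = M(n) with M = o(√(p·(n choose 2))). Then |μ(p) − μ⁺(p, M)| = o(1), where μ(p) = P[G(n,p) ∈ A] and μ⁺(p,M) is the probability that the graph obtained by adding M uniformly random edges (pairs of vertices) to G(n,p) lies in A. -/

import Mathlib

open MeasureTheory ENNReal

/-- The Erdős–Rényi random graph `G(n,p)`, encoded as the product of independent
Bernoulli(`p`) indicators, one for each unordered pair of vertices. -/
noncomputable def erMeasure (n : ℕ) (p : ℝ≥0∞) : Measure (Sym2 (Fin n) → Bool) :=
  Measure.pi fun _ => (PMF.bernoulli (min p 1).toNNReal (by rw [← ENNReal.coe_le_one_iff, ENNReal.coe_toNNReal (ne_top_of_le_ne_top one_ne_top (min_le_right _ _))]; exact min_le_right _ _)).toMeasure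

/-- The simple graph on `{1,…,n}` determined by an edge-indicator function. -/
def graphOf {n : ℕ} (ω : Sym2 (Fin n) → Bool) : SimpleGraph (Fin n) where
  Adj u v := u ≠ v ∧ ω s(u, v) = true
  symm := ⟨by
    intro u v ⟨h, h'⟩
    exact ⟨h.symm, by rwa [Sym2.eq_swap]⟩⟩
  loopless := ⟨fun v ⟨h, _⟩ => h rfl⟩

/-- The result of adding the set `s` of edges to the edge-indicator `ω`. -/
def addEdges {n : ℕ} (s : Finset (Sym2 (Fin n))) (ω : Sym2 (Fin n) → Bool) :
    Sym2 (Fin n) → Bool :=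
  fun e => ω e || decide (e ∈ s)

/-- `G(n,p,+M)`: sample `G(n,p)`, then add a uniformly random set of `M` of the
`(n choose 2)` pairs of vertices as edges. -/
noncomputable def erPlus (n : ℕ) (p : ℝ≥0∞) (M : ℕ) : Measure (Sym2 (Fin n) → Bool) :=
  ((((Finset.univ.filter fun e : Sym2 (Fin n) => ¬ e.IsDiag).powersetCard M).card : ℝ≥0∞))⁻¹ •
    ∑ s ∈ (Finset.univ.filter fun e : Sym2 (Fin n) => ¬ e.IsDiag).powersetCard M,
      Measure.map (addEdges s) (erMeasure n p)

/-!
Write `N = n choose 2` and `R = √(p N)`. Monotonicity of `A` gives `μ(p) ≤ μ⁺(p, M)` at once.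
For the other direction, sprinkle an `ε`-random set `K` of pairs on top of `G(n,p)`. Since
`A` is monotone and a uniform `M`-subset of a uniform `k`-set with `k ≥ M` is a uniform
`M`-set, `G(n,p) ∪ K` lies in `A` at least as often as `G(n,p,+M)`, except on the event
`|K| < M`, whose probability Chebyshev bounds by `Nε / (Nε - M)²`. But `G(n,p) ∪ K` is just
`G(n, p + ε(1 - p))`, and the Hellinger distance bounds its total variation distance from
`G(n,p)` by `2√(2Nε² / p)`. With `Nε = 2√(M R)` both errors are `O(√(M / R))`, which tends
to `0` because `M = o(R)`.
-/

namespace ErdosRenyiSprinkling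

open Finset

lemma sum_abs_sub_le_hellinger {α : Type*} [Fintype α] {a b : α → ℝ}
    (ha : ∀ x, 0 ≤ a x) (hb : ∀ x, 0 ≤ b x) (ha1 : ∑ x, a x = 1) (hb1 : ∑ x, b x = 1) :
    ∑ x, |a x - b x| ≤ 2 * √(2 * (1 - ∑ x, √(a x * b x))) := by
  set B := ∑ x, √(a x * b x)
  have hab : ∀ x, √(a x * b x) = √(a x) * √(b x) := fun x => Real.sqrt_mul (ha x) _
  have hsub : ∑ x, (√(a x) - √(b x)) ^ 2 = 2 * (1 - B) := by
    simp only [sub_sq, Real.sq_sqrt (ha _), Real.sq_sqrt (hb _), sum_add_distrib, sum_sub_distrib,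
      ha1, hb1, B, hab, mul_assoc, ← mul_sum]
    ring
  have hadd : ∑ x, (√(a x) + √(b x)) ^ 2 = 2 * (1 + B) := by
    simp only [add_sq, Real.sq_sqrt (ha _), Real.sq_sqrt (hb _), sum_add_distrib,
      ha1, hb1, B, hab, mul_assoc, ← mul_sum]
    ring
  have hB : B ≤ 1 := by nlinarith [sum_nonneg fun x (_ : x ∈ univ) => sq_nonneg (√(a x) - √(b x))]
  have hfactor : ∀ x, |a x - b x| = |√(a x) - √(b x)| * (√(a x) + √(b x)) := fun x => by
    rw [← abs_of_nonneg (by positivity : 0 ≤ √(a x) + √(b x)), ← abs_mul, mul_comm,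
      ← sq_sub_sq, Real.sq_sqrt (ha x), Real.sq_sqrt (hb x)]
  have hcs := sum_mul_sq_le_sq_mul_sq univ (fun x => |√(a x) - √(b x)|) (fun x => √(a x) + √(b x))
  simp only [sq_abs, hsub, hadd, ← hfactor] at hcs
  calc ∑ x, |a x - b x| ≤ √((2 * (1 - B)) * 2 ^ 2) :=
        (le_abs_self _).trans (Real.abs_le_sqrt (hcs.trans (by nlinarith)))
    _ = 2 * √(2 * (1 - B)) := by
        rw [Real.sqrt_mul (by linarith), Real.sqrt_sq zero_le_two, mul_comm]

def bernWeight (r : ℝ) (b : Bool) : ℝ := bif b then r else 1 - r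

lemma bernWeight_nonneg {r : ℝ} (hr : r ∈ Set.Icc (0 : ℝ) 1) (b : Bool) :
    0 ≤ bernWeight r b := by
  cases b <;> simp [bernWeight, hr.1, hr.2]

lemma sum_bernWeight (r : ℝ) : ∑ b, bernWeight r b = 1 := by
  simp [bernWeight]

lemma sum_bernWeight_or (r s : ℝ) (b : Bool) :
    ∑ c : Bool × Bool with (c.1 || c.2) = b, bernWeight r c.1 * bernWeight s c.2
      = bernWeight (r + s * (1 - r)) b := by
  rw [sum_filter, Fintype.sum_prod_type]
  cases b <;> simp [bernWeight] <;> ring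

noncomputable def bhattacharyya (r s : ℝ) : ℝ := √(r * s) + √((1 - r) * (1 - s))

lemma one_sub_bhattacharyya {r s : ℝ} (hr : r ∈ Set.Icc (0 : ℝ) 1) (hs : s ∈ Set.Icc (0 : ℝ) 1) :
    1 - bhattacharyya r s = ((√r - √s) ^ 2 + (√(1 - r) - √(1 - s)) ^ 2) / 2 := by
  rw [bhattacharyya, Real.sqrt_mul hr.1, Real.sqrt_mul (sub_nonneg.2 hr.2), sub_sq, sub_sq,
    Real.sq_sqrt hr.1, Real.sq_sqrt hs.1, Real.sq_sqrt (sub_nonneg.2 hr.2),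
    Real.sq_sqrt (sub_nonneg.2 hs.2)]
  ring

lemma bhattacharyya_le_one {r s : ℝ} (hr : r ∈ Set.Icc (0 : ℝ) 1) (hs : s ∈ Set.Icc (0 : ℝ) 1) :
    bhattacharyya r s ≤ 1 := by
  have := one_sub_bhattacharyya hr hs
  nlinarith [sq_nonneg (√r - √s), sq_nonneg (√(1 - r) - √(1 - s))]

lemma bhattacharyya_self {r : ℝ} (hr : r ∈ Set.Icc (0 : ℝ) 1) : bhattacharyya r r = 1 := by
  rw [bhattacharyya, Real.sqrt_mul_self hr.1, Real.sqrt_mul_self (sub_nonneg.2 hr.2)]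
  ring

lemma add_mul_one_sub_mem_Icc {p ε : ℝ} (hp : p ∈ Set.Icc (0 : ℝ) 1)
    (hε : ε ∈ Set.Icc (0 : ℝ) 1) : p + ε * (1 - p) ∈ Set.Icc (0 : ℝ) 1 :=
  ⟨by nlinarith [hp.1, hp.2, hε.1], by nlinarith [hp.1, hp.2, hε.2]⟩

/-- The bound is quadratic, not linear, in `ε`: for `q = p + ε (1 - p)` the two squared Hellinger
terms are `(q - p)² / (√q + √p)²` and `(1 - p) (1 - √(1 - ε))²`. -/
lemma mul_one_sub_bhattacharyya_le {p ε : ℝ} (hp : p ∈ Set.Icc (0 : ℝ) 1)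
    (hε : ε ∈ Set.Icc (0 : ℝ) 1) :
    p * (1 - bhattacharyya (p + ε * (1 - p)) p) ≤ ε ^ 2 := by
  have hq := add_mul_one_sub_mem_Icc hp hε
  obtain ⟨hp0, hp1⟩ := hp
  obtain ⟨hε0, hε1⟩ := hε
  rw [one_sub_bhattacharyya hq ⟨hp0, hp1⟩,
    show 1 - (p + ε * (1 - p)) = (1 - ε) * (1 - p) by ring,
    Real.sqrt_mul (sub_nonneg.2 hε1)]
  set a := √(p + ε * (1 - p))
  set b := √p
  set c := √(1 - ε)
  set d := √(1 - p)
  have ha : a ^ 2 = p + ε * (1 - p) := Real.sq_sqrt hq.1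
  have hb : b ^ 2 = p := Real.sq_sqrt hp0
  have hd : d ^ 2 = 1 - p := Real.sq_sqrt (sub_nonneg.2 hp1)
  have hba : b ≤ a := Real.sqrt_le_sqrt (by nlinarith)
  have hc1 : c ≤ 1 := Real.sqrt_le_one.2 (by linarith)
  have hc : 1 - ε ≤ c := Real.le_sqrt_of_sq_le (by nlinarith)
  have hfirst : p * (a - b) ^ 2 ≤ ε ^ 2 :=
    calc p * (a - b) ^ 2 = b ^ 2 * (a - b) ^ 2 := by rw [hb]
      _ ≤ (a + b) ^ 2 * (a - b) ^ 2 := by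
          gcongr; nlinarith [Real.sqrt_nonneg p, Real.sqrt_nonneg (p + ε * (1 - p))]
      _ = (ε * (1 - p)) ^ 2 := by rw [← mul_pow, ← sq_sub_sq, ha, hb]; ring
      _ ≤ ε ^ 2 := by
          rw [mul_pow]
          exact mul_le_of_le_one_right (sq_nonneg ε) (pow_le_one₀ (by linarith) (by linarith))
  have hsecond : p * (d - c * d) ^ 2 ≤ ε ^ 2 := by
    have : (d - c * d) ^ 2 = (1 - p) * (1 - c) ^ 2 := by rw [← hd]; ring
    rw [this]
    have : (1 - c) ^ 2 ≤ ε ^ 2 := pow_le_pow_left₀ (by linarith) (by linarith) 2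
    nlinarith [mul_le_mul_of_nonneg_left this (mul_nonneg hp0 (sub_nonneg.2 hp1))]
  nlinarith

lemma bernsteinPolynomial_eval_nonneg {N k : ℕ} {ε : ℝ} (hε : ε ∈ Set.Icc (0 : ℝ) 1) :
    0 ≤ (bernsteinPolynomial ℝ N k).eval ε := by
  simp only [bernsteinPolynomial, Polynomial.eval_mul, Polynomial.eval_pow, Polynomial.eval_sub,
    Polynomial.eval_one, Polynomial.eval_X, Polynomial.eval_natCast]
  exact mul_nonneg (mul_nonneg (Nat.cast_nonneg _) (pow_nonneg hε.1 _))
    (pow_nonneg (sub_nonneg.2 hε.2) _)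

lemma sum_bernsteinPolynomial_eval (N : ℕ) (ε : ℝ) :
    ∑ k ∈ range (N + 1), (bernsteinPolynomial ℝ N k).eval ε = 1 := by
  simpa [Polynomial.eval_finsetSum] using congrArg (Polynomial.eval ε) (bernsteinPolynomial.sum ℝ N)

/-- The Bernstein polynomials at `ε` are the `Binomial(N, ε)` probabilities: this is Chebyshev's
bound on the lower tail. -/
lemma sum_bernsteinPolynomial_lt_le {N M : ℕ} {ε : ℝ} (hε : ε ∈ Set.Icc (0 : ℝ) 1)
    (hM : M < N * ε) :
    ∑ k ∈ range (N + 1) with k < M, (bernsteinPolynomial ℝ N k).eval ε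
      ≤ N * ε / (N * ε - M) ^ 2 := by
  have hvar : ∑ k ∈ range (N + 1), (N * ε - k) ^ 2 * (bernsteinPolynomial ℝ N k).eval ε
      = N * ε * (1 - ε) := by
    simpa [Polynomial.eval_finsetSum] using
      congrArg (Polynomial.eval ε) (bernsteinPolynomial.variance ℝ N)
  have hgap : 0 < N * ε - M := sub_pos.2 hM
  rw [le_div_iff₀ (by positivity), sum_mul]
  calc ∑ k ∈ range (N + 1) with k < M, (bernsteinPolynomial ℝ N k).eval ε * (N * ε - M) ^ 2
      ≤ ∑ k ∈ range (N + 1) with k < M, (N * ε - k) ^ 2 * (bernsteinPolynomial ℝ N k).eval ε := by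
        refine sum_le_sum fun k hk => ?_
        have hkM : (k : ℝ) ≤ M := by exact_mod_cast (mem_filter.1 hk).2.le
        rw [mul_comm]
        have := bernsteinPolynomial_eval_nonneg (N := N) (k := k) hε
        gcongr
    _ ≤ ∑ k ∈ range (N + 1), (N * ε - k) ^ 2 * (bernsteinPolynomial ℝ N k).eval ε :=
        sum_le_sum_of_subset_of_nonneg (filter_subset _ _) fun k _ _ =>
          mul_nonneg (sq_nonneg _) (bernsteinPolynomial_eval_nonneg hε)
    _ ≤ N * ε := by
        rw [hvar]
        exact mul_le_of_le_one_right (mul_nonneg (Nat.cast_nonneg _) hε.1) (by linarith [hε.1])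

section

variable {ι : Type*}

def IsProbVec (ρ : ι → ℝ) : Prop := ∀ i, ρ i ∈ Set.Icc (0 : ℝ) 1

section

variable [Fintype ι]

def prodWeight (ρ : ι → ℝ) (ω : ι → Bool) : ℝ := ∏ i, bernWeight (ρ i) (ω i)

lemma prodWeight_nonneg {ρ : ι → ℝ} (hρ : IsProbVec ρ) (ω : ι → Bool) : 0 ≤ prodWeight ρ ω :=
  prod_nonneg fun i _ => bernWeight_nonneg (hρ i) _

end

variable [DecidableEq ι]

def sprinkleRate (p ε : ℝ) (D : Finset ι) (i : ι) : ℝ := if i ∈ D then p + ε * (1 - p) else p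

lemma isProbVec_sprinkleRate {p ε : ℝ} (hp : p ∈ Set.Icc (0 : ℝ) 1) (hε : ε ∈ Set.Icc (0 : ℝ) 1)
    (D : Finset ι) : IsProbVec (sprinkleRate p ε D) := fun i => by
  unfold sprinkleRate
  split_ifs
  exacts [add_mul_one_sub_mem_Icc hp hε, hp]

def addSet (s : Finset ι) (ω : ι → Bool) : ι → Bool := fun i => ω i || decide (i ∈ s)

lemma le_addSet (s : Finset ι) (ω : ι → Bool) : ω ≤ addSet s ω :=
  fun i => Bool.le_iff_imp.2 fun h => by simp [addSet, h]

lemma addSet_mono {s K : Finset ι} (hsK : s ⊆ K) (ω : ι → Bool) : addSet s ω ≤ addSet K ω :=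
  fun i => by
    simp only [addSet, Bool.le_iff_imp, Bool.or_eq_true, decide_eq_true_eq]
    exact Or.imp_right (@hsK i)

lemma card_filter_superset_powersetCard {D s : Finset ι} {m k : ℕ} (hs : s ∈ D.powersetCard m)
    (hmk : m ≤ k) : #{K ∈ D.powersetCard k | s ⊆ K} = (#D - m).choose (k - m) := by
  obtain ⟨hsD, rfl⟩ := mem_powersetCard.1 hs
  rw [← card_sdiff_of_subset hsD, ← card_powersetCard]
  refine card_nbij' (· \ s) (s ∪ ·) (fun K hK => ?_) (fun J hJ => ?_) (fun K hK => ?_)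
    (fun J hJ => ?_)
  · simp only [mem_coe, mem_filter, mem_powersetCard] at hK ⊢
    refine ⟨sdiff_subset_sdiff hK.1.1 le_rfl, ?_⟩
    rw [card_sdiff_of_subset hK.2, hK.1.2]
  · simp only [mem_coe, mem_filter, mem_powersetCard] at hJ ⊢
    refine ⟨⟨union_subset hsD (hJ.1.trans sdiff_subset), ?_⟩, subset_union_left⟩
    rw [card_union_of_disjoint (disjoint_of_subset_right hJ.1 disjoint_sdiff), hJ.2]
    omega
  · exact union_sdiff_of_subset (mem_filter.1 hK).2
  · exact union_sdiff_cancel_left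
      (disjoint_of_subset_right (mem_powersetCard.1 hJ).1 disjoint_sdiff)

lemma choose_mul_sum_powersetCard_le {D : Finset ι} {m k : ℕ} (hmk : m ≤ k) (f : Finset ι → ℝ)
    (hf : ∀ s K, s ⊆ K → f s ≤ f K) :
    ((#D).choose k : ℝ) * ∑ s ∈ D.powersetCard m, f s
      ≤ (#D).choose m * ∑ K ∈ D.powersetCard k, f K := by
  have hsub : ∑ K ∈ D.powersetCard k, ∑ s ∈ K.powersetCard m, f s
      ≤ ∑ K ∈ D.powersetCard k, (k.choose m : ℝ) * f K := by
    refine sum_le_sum fun K hK => ?_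
    have := sum_le_card_nsmul (K.powersetCard m) f (f K)
      fun s hs => hf s K (mem_powersetCard.1 hs).1
    rwa [card_powersetCard, (mem_powersetCard.1 hK).2, nsmul_eq_mul] at this
  have hcount : ∑ K ∈ D.powersetCard k, ∑ s ∈ K.powersetCard m, f s
      = ((#D - m).choose (k - m) : ℝ) * ∑ s ∈ D.powersetCard m, f s := by
    rw [sum_comm' (t' := D.powersetCard m) (s' := fun s => {K ∈ D.powersetCard k | s ⊆ K}),
      mul_sum]
    · refine sum_congr rfl fun s hs => ?_
      rw [sum_const, card_filter_superset_powersetCard hs hmk, nsmul_eq_mul]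
    · intro K s
      simp only [mem_powersetCard, mem_filter]
      constructor
      · rintro ⟨⟨hKD, hK⟩, hsK, hs⟩
        exact ⟨⟨⟨hKD, hK⟩, hsK⟩, hsK.trans hKD, hs⟩
      · rintro ⟨⟨⟨hKD, hK⟩, hsK⟩, -, hs⟩
        exact ⟨⟨hKD, hK⟩, hsK, hs⟩
  have hchoose : ((#D).choose k : ℝ) * k.choose m = (#D).choose m * (#D - m).choose (k - m) := by
    exact_mod_cast Nat.choose_mul hmk
  have hpos : (0 : ℝ) < k.choose m := by exact_mod_cast Nat.choose_pos hmk
  rw [← mul_sum] at hsub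
  refine le_of_mul_le_mul_right ?_ hpos
  calc ((#D).choose k : ℝ) * (∑ s ∈ D.powersetCard m, f s) * k.choose m
      = (#D).choose m * (((#D - m).choose (k - m) : ℝ) * ∑ s ∈ D.powersetCard m, f s) := by
        linear_combination (∑ s ∈ D.powersetCard m, f s) * hchoose
    _ ≤ (#D).choose m * (k.choose m * ∑ K ∈ D.powersetCard k, f K) := by
        rw [← hcount]; gcongr
    _ = (#D).choose m * (∑ K ∈ D.powersetCard k, f K) * k.choose m := by ring

lemma bernsteinPolynomial_eval_mul_avg_le {D : Finset ι} {M k : ℕ} {ε : ℝ}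
    (hε : ε ∈ Set.Icc (0 : ℝ) 1) (hMk : M ≤ k) (hMD : M ≤ #D) (f : Finset ι → ℝ)
    (hf : ∀ s K, s ⊆ K → f s ≤ f K) :
    (bernsteinPolynomial ℝ #D k).eval ε * (((#D).choose M : ℝ)⁻¹ * ∑ s ∈ D.powersetCard M, f s)
      ≤ ε ^ k * (1 - ε) ^ (#D - k) * ∑ K ∈ D.powersetCard k, f K := by
  have hC : (0 : ℝ) < (#D).choose M := by exact_mod_cast Nat.choose_pos hMD
  have hw : 0 ≤ ε ^ k * (1 - ε) ^ (#D - k) :=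
    mul_nonneg (pow_nonneg hε.1 _) (pow_nonneg (sub_nonneg.2 hε.2) _)
  have hmono : ((#D).choose k : ℝ) * (((#D).choose M : ℝ)⁻¹ * ∑ s ∈ D.powersetCard M, f s)
      ≤ ∑ K ∈ D.powersetCard k, f K := by
    rw [mul_left_comm, inv_mul_le_iff₀ hC]
    exact choose_mul_sum_powersetCard_le hMk f hf
  calc (bernsteinPolynomial ℝ #D k).eval ε * (((#D).choose M : ℝ)⁻¹ * ∑ s ∈ D.powersetCard M, f s)
      = ε ^ k * (1 - ε) ^ (#D - k)
          * ((#D).choose k * (((#D).choose M : ℝ)⁻¹ * ∑ s ∈ D.powersetCard M, f s)) := by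
        simp only [bernsteinPolynomial, Polynomial.eval_mul, Polynomial.eval_pow,
          Polynomial.eval_sub, Polynomial.eval_one, Polynomial.eval_X, Polynomial.eval_natCast]
        ring
    _ ≤ ε ^ k * (1 - ε) ^ (#D - k) * ∑ K ∈ D.powersetCard k, f K := by gcongr

lemma one_sub_mul_avg_le_sum_powerset {D : Finset ι} {M : ℕ} {ε : ℝ} (hε : ε ∈ Set.Icc (0 : ℝ) 1)
    (hM : M < #D * ε) (f : Finset ι → ℝ) (hf0 : ∀ K, 0 ≤ f K) (hf : ∀ s K, s ⊆ K → f s ≤ f K) :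
    (1 - #D * ε / (#D * ε - M) ^ 2) * (((#D).choose M : ℝ)⁻¹ * ∑ s ∈ D.powersetCard M, f s)
      ≤ ∑ K ∈ D.powerset, ε ^ #K * (1 - ε) ^ (#D - #K) * f K := by
  set N := #D
  set avg := ((N.choose M : ℝ))⁻¹ * ∑ s ∈ D.powersetCard M, f s
  have hMN : M ≤ N := by
    have : (M : ℝ) ≤ N := hM.le.trans (mul_le_of_le_one_right (Nat.cast_nonneg _) hε.2)
    exact_mod_cast this
  have havg : 0 ≤ avg := mul_nonneg (by positivity) (sum_nonneg fun s _ => hf0 s)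
  have hsplit := sum_filter_add_sum_filter_not (range (N + 1)) (M ≤ ·)
    fun k => (bernsteinPolynomial ℝ N k).eval ε
  simp only [not_le, sum_bernsteinPolynomial_eval] at hsplit
  have htail := sum_bernsteinPolynomial_lt_le hε hM
  calc (1 - N * ε / (N * ε - M) ^ 2) * avg
      ≤ (∑ k ∈ range (N + 1) with M ≤ k, (bernsteinPolynomial ℝ N k).eval ε) * avg := by
        gcongr; linarith
    _ = ∑ k ∈ range (N + 1), (if M ≤ k then (bernsteinPolynomial ℝ N k).eval ε * avg else 0) := by
        rw [sum_mul, sum_filter]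
    _ ≤ ∑ k ∈ range (N + 1), ε ^ k * (1 - ε) ^ (N - k) * ∑ K ∈ D.powersetCard k, f K := by
        refine sum_le_sum fun k _ => ?_
        split_ifs with hMk
        · exact bernsteinPolynomial_eval_mul_avg_le hε hMk hMN f hf
        · exact mul_nonneg (mul_nonneg (pow_nonneg hε.1 _) (pow_nonneg (sub_nonneg.2 hε.2) _))
            (sum_nonneg fun K _ => hf0 K)
    _ = ∑ K ∈ D.powerset, ε ^ #K * (1 - ε) ^ (N - #K) * f K := by
        rw [sum_powerset]
        refine sum_congr rfl fun k _ => ?_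
        rw [mul_sum]
        exact sum_congr rfl fun K hK => by rw [(mem_powersetCard.1 hK).2]

variable [Fintype ι]

lemma prodWeight_ite_mem_decide_mem (D : Finset ι) (ε : ℝ) (K : Finset ι) :
    prodWeight (fun i => if i ∈ D then ε else 0) (fun i => decide (i ∈ K))
      = if K ⊆ D then ε ^ #K * (1 - ε) ^ (#D - #K) else 0 := by
  split_ifs with hKD
  · have hterm : ∀ i, bernWeight (if i ∈ D then ε else 0) (decide (i ∈ K))
        = (if i ∈ K then ε else 1) * (if i ∈ D \ K then 1 - ε else 1) := fun i => by
      by_cases hK : i ∈ K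
      · simp [bernWeight, hK, hKD hK]
      · by_cases hD : i ∈ D <;> simp [bernWeight, hK, hD]
    simp only [prodWeight, hterm, prod_mul_distrib, prod_ite_mem, univ_inter, prod_const,
      card_sdiff_of_subset hKD]
  · obtain ⟨i, hiK, hiD⟩ := not_subset.1 hKD
    exact prod_eq_zero (mem_univ i) (by simp [bernWeight, hiK, hiD])

def finsetEquivBoolFun : Finset ι ≃ (ι → Bool) where
  toFun K i := decide (i ∈ K)
  invFun κ := {i | κ i}
  left_inv K := by ext; simp
  right_inv κ := by funext; simp

lemma sum_prodWeight_mul_eq_sum_powerset (D : Finset ι) (ε : ℝ) (G : (ι → Bool) → ℝ) :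
    ∑ κ, prodWeight (fun i => if i ∈ D then ε else 0) κ * G κ
      = ∑ K ∈ D.powerset, ε ^ #K * (1 - ε) ^ (#D - #K) * G (fun i => decide (i ∈ K)) := by
  rw [← Fintype.sum_equiv finsetEquivBoolFun _ _ fun _ => rfl]
  simp only [finsetEquivBoolFun, Equiv.coe_fn_mk, prodWeight_ite_mem_decide_mem, ite_mul, zero_mul,
    ← sum_filter]
  congr 1
  ext K
  simp

noncomputable def prodProb (ρ : ι → ℝ) (A : Set (ι → Bool)) : ℝ :=
  ∑ ω, A.indicator (prodWeight ρ) ω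

lemma sum_prodWeight (ρ : ι → ℝ) : ∑ ω, prodWeight ρ ω = 1 := by
  simp only [prodWeight, ← Fintype.prod_sum, sum_bernWeight, prod_const_one]

lemma prodProb_eq_sum_mul_indicator (ρ : ι → ℝ) (A : Set (ι → Bool)) :
    prodProb ρ A = ∑ ω, prodWeight ρ ω * A.indicator 1 ω := by
  refine sum_congr rfl fun ω _ => ?_
  by_cases hω : ω ∈ A <;> simp [hω]

lemma prodProb_nonneg {ρ : ι → ℝ} (hρ : IsProbVec ρ) (A : Set (ι → Bool)) :
    0 ≤ prodProb ρ A :=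
  sum_nonneg fun ω _ => Set.indicator_nonneg (fun ω _ => prodWeight_nonneg hρ ω) ω

lemma prodProb_mono {ρ : ι → ℝ} (hρ : IsProbVec ρ) {A B : Set (ι → Bool)} (hAB : A ⊆ B) :
    prodProb ρ A ≤ prodProb ρ B :=
  sum_le_sum fun ω _ => Set.indicator_le_indicator_of_subset hAB (prodWeight_nonneg hρ) ω

lemma prodProb_le_one {ρ : ι → ℝ} (hρ : IsProbVec ρ) (A : Set (ι → Bool)) :
    prodProb ρ A ≤ 1 := by
  simpa [prodProb, sum_prodWeight] using prodProb_mono hρ (Set.subset_univ A)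

lemma sum_sqrt_prodWeight_mul {ρ σ : ι → ℝ} (hρ : IsProbVec ρ) (hσ : IsProbVec σ) :
    ∑ ω, √(prodWeight ρ ω * prodWeight σ ω) = ∏ i, bhattacharyya (ρ i) (σ i) := by
  have hterm : ∀ ω : ι → Bool, √(prodWeight ρ ω * prodWeight σ ω)
      = ∏ i, √(bernWeight (ρ i) (ω i) * bernWeight (σ i) (ω i)) := fun ω => by
    rw [prodWeight, prodWeight, ← prod_mul_distrib, Real.sqrt_prod _ fun i _ =>
      mul_nonneg (bernWeight_nonneg (hρ i) _) (bernWeight_nonneg (hσ i) _)]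
  simp only [hterm]
  rw [← Fintype.prod_sum fun i b => √(bernWeight (ρ i) b * bernWeight (σ i) b)]
  simp only [Fintype.sum_bool, bernWeight, cond_true, cond_false, bhattacharyya]

lemma prodProb_sub_le_bhattacharyya {ρ σ : ι → ℝ} (hρ : IsProbVec ρ) (hσ : IsProbVec σ)
    (A : Set (ι → Bool)) :
    prodProb ρ A - prodProb σ A ≤ 2 * √(2 * (1 - ∏ i, bhattacharyya (ρ i) (σ i))) := by
  rw [← sum_sqrt_prodWeight_mul hρ hσ]
  refine le_trans ?_ (sum_abs_sub_le_hellinger (prodWeight_nonneg hρ) (prodWeight_nonneg hσ)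
    (sum_prodWeight ρ) (sum_prodWeight σ))
  rw [prodProb, prodProb, ← sum_sub_distrib]
  refine sum_le_sum fun ω _ => ?_
  by_cases hω : ω ∈ A
  · simp only [Set.indicator_of_mem hω, le_abs_self]
  · simp only [Set.indicator_of_notMem hω, sub_zero, abs_nonneg]

lemma prodProb_sprinkleRate_sub_le {p ε : ℝ} (hp : p ∈ Set.Ioc (0 : ℝ) 1)
    (hε : ε ∈ Set.Icc (0 : ℝ) 1) (D : Finset ι) (A : Set (ι → Bool)) :
    prodProb (sprinkleRate p ε D) A - prodProb (fun _ => p) A ≤ 2 * √(2 * (#D * ε ^ 2 / p)) := by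
  have hp' : p ∈ Set.Icc (0 : ℝ) 1 := Set.Ioc_subset_Icc_self hp
  set b := bhattacharyya (p + ε * (1 - p)) p
  have hprod : ∏ i, bhattacharyya (sprinkleRate p ε D i) p = b ^ #D := by
    simp only [sprinkleRate, apply_ite (bhattacharyya · p), bhattacharyya_self hp', prod_ite_mem,
      univ_inter, prod_const, b]
  have hb1 : b ≤ 1 := bhattacharyya_le_one (add_mul_one_sub_mem_Icc hp' hε) hp'
  have hb0 : 0 ≤ b := add_nonneg (Real.sqrt_nonneg _) (Real.sqrt_nonneg _)
  have hbernoulli := one_add_mul_sub_le_pow (a := b) (by linarith) #D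
  have hb : p * (1 - b) ≤ ε ^ 2 := mul_one_sub_bhattacharyya_le hp' hε
  refine (prodProb_sub_le_bhattacharyya (isProbVec_sprinkleRate hp' hε D) (fun _ => hp') A).trans ?_
  rw [hprod]
  gcongr
  rw [le_div_iff₀ hp.1]
  calc (1 - b ^ #D) * p ≤ #D * (p * (1 - b)) := by nlinarith [hp.1]
    _ ≤ #D * ε ^ 2 := by gcongr

lemma sum_prod_mul_comp_eq {α β : Type*} [Fintype α] [Fintype β] [DecidableEq β] (f : α → β)
    (a : ι → α → ℝ) (g : (ι → β) → ℝ) :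
    ∑ x : ι → α, (∏ i, a i (x i)) * g (f ∘ x)
      = ∑ y : ι → β, (∏ i, ∑ c with f c = y i, a i c) * g y := by
  rw [← sum_fiberwise univ (f ∘ ·)]
  refine sum_congr rfl fun y _ => ?_
  have hfiber : ({x | f ∘ x = y} : Finset (ι → α)) = Fintype.piFinset fun i => {c | f c = y i} := by
    ext x
    simp [funext_iff]
  rw [prod_univ_sum, ← hfiber, sum_mul]
  exact sum_congr rfl fun x hx => by rw [(mem_filter.1 hx).2]

lemma prodProb_sprinkleRate_eq (p ε : ℝ) (D : Finset ι) (A : Set (ι → Bool)) :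
    prodProb (sprinkleRate p ε D) A
      = ∑ K ∈ D.powerset,
          ε ^ #K * (1 - ε) ^ (#D - #K) * prodProb (fun _ => p) (addSet K ⁻¹' A) := by
  set e : ι → ℝ := fun i => if i ∈ D then ε else 0
  have hrate : ∀ i b, bernWeight (sprinkleRate p ε D i) b
      = ∑ c : Bool × Bool with (c.1 || c.2) = b, bernWeight p c.1 * bernWeight (e i) c.2 := by
    intro i b
    rw [sum_bernWeight_or]
    by_cases hi : i ∈ D <;> simp [sprinkleRate, e, hi]
  have hpush := sum_prod_mul_comp_eq (fun c : Bool × Bool => c.1 || c.2)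
    (fun i c => bernWeight p c.1 * bernWeight (e i) c.2) (A.indicator 1)
  simp only [← hrate] at hpush
  rw [prodProb_eq_sum_mul_indicator]
  unfold prodWeight
  rw [← hpush,
    ← Fintype.sum_equiv (Equiv.arrowProdEquivProdArrow ι (fun _ => Bool) (fun _ => Bool)).symm
      _ _ fun _ => rfl, Fintype.sum_prod_type, sum_comm]
  refine (sum_congr rfl fun κ _ => ?_).trans (sum_prodWeight_mul_eq_sum_powerset D ε
    fun κ => prodProb (fun _ => p) ((fun ω i => ω i || κ i) ⁻¹' A))
  rw [prodProb_eq_sum_mul_indicator, mul_sum]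
  refine sum_congr rfl fun ω _ => ?_
  simp only [Equiv.arrowProdEquivProdArrow, Equiv.coe_fn_symm_mk, prod_mul_distrib, prodWeight,
    Function.comp_def, e]
  rw [show A.indicator 1 (fun i => ω i || κ i) = ((fun ω i => ω i || κ i) ⁻¹' A).indicator 1 ω
    from rfl]
  ring

noncomputable def addRandomProb (p : ℝ) (D : Finset ι) (M : ℕ) (A : Set (ι → Bool)) : ℝ :=
  ((#D).choose M : ℝ)⁻¹ * ∑ s ∈ D.powersetCard M, prodProb (fun _ => p) (addSet s ⁻¹' A)

lemma addRandomProb_zero (p : ℝ) (D : Finset ι) (A : Set (ι → Bool)) :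
    addRandomProb p D 0 A = prodProb (fun _ => p) A := by
  have : addSet (∅ : Finset ι) = id := by funext ω i; simp [addSet]
  simp [addRandomProb, this]

variable {p : ℝ} {D : Finset ι} {M : ℕ} {A : Set (ι → Bool)}

lemma prodProb_le_addRandomProb (hA : IsUpperSet A) (hp : p ∈ Set.Icc (0 : ℝ) 1)
    (hM : M ≤ #D) : prodProb (fun _ => p) A ≤ addRandomProb p D M A := by
  have hC : (0 : ℝ) < (#D).choose M := by exact_mod_cast Nat.choose_pos hM
  rw [addRandomProb, le_inv_mul_iff₀ hC]
  have := card_nsmul_le_sum (D.powersetCard M) (fun s => prodProb (fun _ => p) (addSet s ⁻¹' A))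
    (prodProb (fun _ => p) A) fun s _ =>
      prodProb_mono (fun _ => hp) fun ω hω => hA (le_addSet s ω) hω
  rwa [card_powersetCard, nsmul_eq_mul] at this

lemma addRandomProb_le_one (hp : p ∈ Set.Icc (0 : ℝ) 1) : addRandomProb p D M A ≤ 1 := by
  rcases Nat.eq_zero_or_pos ((#D).choose M) with hC | hC
  · simp [addRandomProb, hC]
  rw [addRandomProb, inv_mul_le_iff₀ (by exact_mod_cast hC), mul_one]
  have := sum_le_card_nsmul (D.powersetCard M) (fun s => prodProb (fun _ => p) (addSet s ⁻¹' A))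
    1 fun s _ => prodProb_le_one (fun _ => hp) _
  rwa [card_powersetCard, nsmul_eq_mul, mul_one] at this

lemma addRandomProb_sub_prodProb_le (hA : IsUpperSet A) (hp : p ∈ Set.Ioc (0 : ℝ) 1) {ε : ℝ}
    (hε : ε ∈ Set.Icc (0 : ℝ) 1) (hM : M < #D * ε) :
    addRandomProb p D M A - prodProb (fun _ => p) A
      ≤ 2 * √(2 * (#D * ε ^ 2 / p)) + #D * ε / (#D * ε - M) ^ 2 := by
  have hp' : p ∈ Set.Icc (0 : ℝ) 1 := Set.Ioc_subset_Icc_self hp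
  have hdominate := one_sub_mul_avg_le_sum_powerset hε hM
    (fun K => prodProb (fun _ => p) (addSet K ⁻¹' A)) (fun K => prodProb_nonneg (fun _ => hp') _)
    fun s K hsK => prodProb_mono (fun _ => hp') fun ω hω => hA (addSet_mono hsK ω) hω
  rw [← addRandomProb, ← prodProb_sprinkleRate_eq] at hdominate
  have hhellinger := prodProb_sprinkleRate_sub_le hp hε D A
  have hle1 := addRandomProb_le_one (D := D) (M := M) (A := A) hp'
  have htail : 0 ≤ #D * ε / (#D * ε - M) ^ 2 := by have := hε.1; positivity
  nlinarith

lemma abs_addRandomProb_sub_prodProb_le_of_le (hA : IsUpperSet A) (hp : p ∈ Set.Ioc (0 : ℝ) 1)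
    {x : ℝ} (hx0 : 0 < x) (hMx : 2 * M ≤ x) (hxD : x ≤ #D) :
    |addRandomProb p D M A - prodProb (fun _ => p) A| ≤ 3 * x / √(p * #D) + 4 / x := by
  have hD : (0 : ℝ) < #D := hx0.trans_le hxD
  have hε : x / #D ∈ Set.Icc (0 : ℝ) 1 := ⟨by positivity, (div_le_one hD).2 hxD⟩
  have hDε : #D * (x / #D) = x := mul_div_cancel₀ _ hD.ne'
  have hMε : M < #D * (x / #D) := by rw [hDε]; linarith
  have hhellinger : 2 * √(2 * (#D * (x / #D) ^ 2 / p)) ≤ 3 * x / √(p * #D) := by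
    have hsq : #D * (x / #D) ^ 2 / p = x ^ 2 / (p * #D) := by
      have := hp.1
      field_simp
    have hsqrt2 : √2 ≤ 3 / 2 := Real.sqrt_le_iff.2 ⟨by norm_num, by norm_num⟩
    calc 2 * √(2 * (#D * (x / #D) ^ 2 / p))
        = 2 * √2 * (x / √(p * #D)) := by
          rw [hsq, Real.sqrt_mul zero_le_two, Real.sqrt_div (sq_nonneg x), Real.sqrt_sq hx0.le]
          ring
      _ ≤ 3 * (x / √(p * #D)) := by gcongr; linarith
      _ = 3 * x / √(p * #D) := by ring
  have htail : #D * (x / #D) / (#D * (x / #D) - M) ^ 2 ≤ 4 / x := by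
    rw [hDε, div_le_div_iff₀ (by nlinarith) hx0]
    nlinarith
  have hM : M ≤ #D := by exact_mod_cast (show (M : ℝ) ≤ #D by linarith)
  rw [abs_of_nonneg (sub_nonneg.2 (prodProb_le_addRandomProb hA (Set.Ioc_subset_Icc_self hp) hM))]
  linarith [addRandomProb_sub_prodProb_le hA hp hε hMε]

lemma abs_addRandomProb_sub_prodProb_le (hA : IsUpperSet A) (hp : p ∈ Set.Icc (0 : ℝ) 1)
    (hM : 4 * M ≤ √(p * #D)) :
    |addRandomProb p D M A - prodProb (fun _ => p) A| ≤ 8 * √(M / √(p * #D)) := by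
  rcases Nat.eq_zero_or_pos M with rfl | hM1
  · simp [addRandomProb_zero]
  obtain ⟨R, hRdef⟩ : ∃ R, R = √(p * #D) := ⟨_, rfl⟩
  obtain ⟨t, htdef⟩ : ∃ t, t = √(M / R) := ⟨_, rfl⟩
  rw [← hRdef] at hM ⊢
  rw [← htdef]
  have hM1' : (1 : ℝ) ≤ M := by exact_mod_cast hM1
  have hR : 0 < R := by linarith
  have hpD : 0 < p * #D := Real.sqrt_pos.1 (hRdef ▸ hR)
  have hp0 : 0 < p := pos_of_mul_pos_left hpD (Nat.cast_nonneg _)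
  have hD1 : (1 : ℝ) ≤ #D := by
    exact_mod_cast Nat.one_le_iff_ne_zero.2 fun h => by simp [h] at hpD
  have hRD : R ≤ #D := hRdef ▸ Real.sqrt_le_iff.2 ⟨Nat.cast_nonneg _, by nlinarith [hp.2]⟩
  have ht0 : 0 < t := htdef ▸ Real.sqrt_pos.2 (by positivity)
  have hMt : (M : ℝ) = R * t ^ 2 := by
    rw [htdef, Real.sq_sqrt (by positivity), mul_div_cancel₀ _ hR.ne']
  have ht : t ≤ 1 / 2 := by
    have : t ^ 2 ≤ 1 / 4 := by nlinarith
    nlinarith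
  have hRt : 1 / (R * t) ≤ t := by rw [div_le_iff₀ (by positivity)]; nlinarith
  calc |addRandomProb p D M A - prodProb (fun _ => p) A|
      ≤ 3 * (2 * R * t) / √(p * #D) + 4 / (2 * R * t) :=
        abs_addRandomProb_sub_prodProb_le_of_le hA ⟨hp0, hp.2⟩ (by positivity) (by nlinarith)
          (by nlinarith)
    _ = 6 * t + 2 * (1 / (R * t)) := by
        rw [← hRdef]
        field_simp
        ring
    _ ≤ 8 * t := by linarith

end

instance isProbabilityMeasure_erMeasure (n : ℕ) (P : ℝ≥0∞) :
    IsProbabilityMeasure (erMeasure n P) := by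
  unfold erMeasure; infer_instance

lemma erMeasure_singleton {n : ℕ} {P : ℝ≥0∞} (hP : P ≤ 1) (ω : Sym2 (Fin n) → Bool) :
    erMeasure n P {ω} = ∏ e, bif ω e then P else 1 - P := by
  rw [erMeasure, ← Set.univ_pi_singleton ω, Measure.pi_pi]
  refine prod_congr rfl fun e _ => ?_
  rw [PMF.toMeasure_apply_singleton _ _ (measurableSet_singleton _), PMF.bernoulli_apply,
    min_eq_left hP]
  cases ω e <;> simp [ENNReal.coe_sub, ENNReal.coe_toNNReal (ne_top_of_le_ne_top one_ne_top hP)]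

lemma erMeasure_toReal {n : ℕ} {P : ℝ≥0∞} (hP : P ≤ 1) (S : Set (Sym2 (Fin n) → Bool)) :
    (erMeasure n P S).toReal = prodProb (fun _ => P.toReal) S := by
  classical
  have hS : erMeasure n P S = ∑ ω ∈ univ.filter (· ∈ S), erMeasure n P {ω} := by
    rw [sum_measure_singleton, coe_filter_univ, Set.ofPred_mem_eq]
  have hterm : ∀ ω, (erMeasure n P {ω}).toReal = prodWeight (fun _ => P.toReal) ω := fun ω => by
    rw [erMeasure_singleton hP, ENNReal.toReal_prod]
    refine prod_congr rfl fun e _ => ?_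
    cases ω e
    · simp [bernWeight, ENNReal.toReal_sub_of_le hP ENNReal.one_ne_top]
    · simp [bernWeight]
  rw [hS, ENNReal.toReal_sum fun ω _ => measure_ne_top _ _, prodProb, sum_filter]
  exact sum_congr rfl fun ω _ => by rw [Set.indicator_apply, hterm]

lemma erPlus_toReal {n : ℕ} {P : ℝ≥0∞} (hP : P ≤ 1) (M : ℕ) (S : Set (Sym2 (Fin n) → Bool)) :
    (erPlus n P M S).toReal
      = addRandomProb P.toReal (univ.filter fun e : Sym2 (Fin n) => ¬ e.IsDiag) M S := by
  rw [erPlus, Measure.smul_apply, Measure.finsetSum_apply, smul_eq_mul, ENNReal.toReal_mul,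
    ENNReal.toReal_inv, ENNReal.toReal_natCast, card_powersetCard,
    ENNReal.toReal_sum fun _ _ => measure_ne_top _ _, addRandomProb]
  congr 1
  refine sum_congr rfl fun s _ => ?_
  rw [Measure.map_apply (measurable_of_countable _) S.to_countable.measurableSet,
    erMeasure_toReal hP]
  rfl

lemma card_not_isDiag (n : ℕ) : #(univ.filter fun e : Sym2 (Fin n) => ¬ e.IsDiag) = n.choose 2 := by
  rw [← Fintype.card_subtype, Sym2.card_subtype_not_diag, Fintype.card_fin]

lemma abs_erMeasure_sub_erPlus_le {n : ℕ} {P : ℝ≥0∞} (hP : P ≤ 1) {M : ℕ}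
    {A : Set (Sym2 (Fin n) → Bool)} (hA : IsUpperSet A)
    (hM : 4 * M ≤ √(P.toReal * n.choose 2)) :
    |(erMeasure n P A).toReal - (erPlus n P M A).toReal|
      ≤ 8 * √(M / √(P.toReal * n.choose 2)) := by
  rw [erMeasure_toReal hP, erPlus_toReal hP, abs_sub_comm, ← card_not_isDiag]
  rw [← card_not_isDiag] at hM
  exact abs_addRandomProb_sub_prodProb_le hA ⟨ENNReal.toReal_nonneg, ENNReal.toReal_le_of_le_ofReal
    zero_le_one (by simpa using hP)⟩ hM

end ErdosRenyiSprinkling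

theorem stmt_13_general (A : ∀ n, Set (Sym2 (Fin n) → Bool))
    (hmono : ∀ n (ω ω' : Sym2 (Fin n) → Bool),
      (∀ e, ω e = true → ω' e = true) → ω ∈ A n → ω' ∈ A n)
    (p : ℕ → ℝ≥0∞) (hp : ∀ n, p n ≤ 1) (M : ℕ → ℕ)
    (hM : (fun n => (M n : ℝ)) =o[Filter.atTop]
      fun n => Real.sqrt ((p n).toReal * (n.choose 2 : ℝ))) :
    Filter.Tendsto
      (fun n => |(erMeasure n (p n) (A n)).toReal - (erPlus n (p n) (M n) (A n)).toReal|)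
      Filter.atTop (nhds 0) := by
  have hA : ∀ n, IsUpperSet (A n) := fun n ω ω' hle =>
    hmono n ω ω' fun e => Bool.le_iff_imp.1 (hle e)
  have hsmall : ∀ᶠ n in Filter.atTop, 4 * (M n : ℝ) ≤ √((p n).toReal * n.choose 2) := by
    filter_upwards [hM.bound (by norm_num : (0 : ℝ) < 1 / 4)] with n hn
    rw [Real.norm_natCast, Real.norm_of_nonneg (Real.sqrt_nonneg _)] at hn
    linarith
  have hlim : Filter.Tendsto (fun n => 8 * √(M n / √((p n).toReal * n.choose 2))) Filter.atTop
      (nhds 0) := by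
    simpa using (hM.tendsto_div_nhds_zero.sqrt).const_mul 8
  refine squeeze_zero' (Filter.Eventually.of_forall fun n => abs_nonneg _) ?_ hlim
  filter_upwards [hsmall] with n hn
  exact ErdosRenyiSprinkling.abs_erMeasure_sub_erPlus_le (hp n) (hA n) hn

/-- For a monotone graph property `A` and `M = o(√(p·(n choose 2)))` random added edges,
`|μ(p) − μ⁺(p,M)| = o(1)`. -/
theorem stmt_13 (A : ∀ n, Set (Sym2 (Fin n) → Bool))
    (hAm : ∀ n, MeasurableSet (A n))
    (hmono : ∀ n (ω ω' : Sym2 (Fin n) → Bool),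
      (∀ e, ω e = true → ω' e = true) → ω ∈ A n → ω' ∈ A n)
    (p : ℕ → ℝ≥0∞) (hp : ∀ n, p n ≤ 1) (M : ℕ → ℕ)
    (hM : (fun n => (M n : ℝ)) =o[Filter.atTop]
      fun n => Real.sqrt ((p n).toReal * (n.choose 2 : ℝ))) :
    Filter.Tendsto
      (fun n => |(erMeasure n (p n) (A n)).toReal - (erPlus n (p n) (M n) (A n)).toReal|)
      Filter.atTop (nhds 0) :=
  stmt_13_general A hmono p hp M hM
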